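/- Let G be a connected simple graph on n ≥ 3 vertices with Randić index R and minimum degree δ. Then n/(2(n-1)) ≤ R/δ ≤ (3n - 7 + √6 + 3√2)/6. -/

import Mathlib

/-!
With `x v = 1 / √d(v)`, every edge contributes `x u * x v = (x u² + x v²) / 2 - (x u - x v)² / 2`,
and the first parts sum to `∑ v, d(v) x v² / 2 = n / 2`. Hence `R` is `n / 2` minus the sum of
the edge defects `(x u - x v)² / 2`, which gives `R / δ ≤ n / 4` once `δ ≥ 2`. If `δ = 1`, the defects of at most two edges already
reach `(7 - √6 - 3√2) / 6`: walking from a pendant vertex to a vertex of degree at least `3`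
crosses an edge from degree `≤ 2` to degree `≥ 3`, and together with the pendant edge the least
possible total comes from degrees `1, 2, 3` in a row; if all degrees are at most `2`, there are
two pendant edges. The lower bound holds because every edge term is at least `1 / (n - 1)` and
there are at least `n δ / 2` edges.
-/

open Finset Real Matrix

/-- The Randić index of a finite simple graph:
`R(G) = ∑_{uv ∈ E(G)} 1/√(d(u)·d(v))`. -/
noncomputable def randicIndex {V : Type*} [Fintype V] (G : SimpleGraph V) : ℝ :=
  letI : DecidableRel G.Adj := Classical.decRel _
  ∑ e ∈ G.edgeFinset,
    Sym2.lift ⟨fun u v => 1 / Real.sqrt ((G.degree u : ℝ) * (G.degree v : ℝ)),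
      fun u v => by simp [mul_comm]⟩ e

/-- The algebraic connectivity of a graph on `Fin n`: the second smallest eigenvalue
of the Laplacian matrix, characterized (via Courant–Fischer, since the all-ones vector
is an eigenvector of the smallest eigenvalue `0`) as the infimum of the Rayleigh
quotient over nonzero vectors orthogonal to the all-ones vector. -/
noncomputable def algebraicConnectivity {n : ℕ} (G : SimpleGraph (Fin n)) : ℝ :=
  letI : DecidableRel G.Adj := Classical.decRel _
  sInf {r : ℝ | ∃ x : Fin n → ℝ, x ≠ 0 ∧ (∑ i, x i) = 0 ∧
    r = (x ⬝ᵥ ((G.lapMatrix ℝ).mulVec x)) / (x ⬝ᵥ x)}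

/-- The edge connectivity of a graph: the least number of edges whose deletion
disconnects the graph. -/
noncomputable def edgeConnectivity {V : Type*} [Fintype V] (G : SimpleGraph V) : ℕ :=
  sInf {k : ℕ | ∃ s : Set (Sym2 V), s ⊆ G.edgeSet ∧ s.ncard = k ∧
    ¬ (G.deleteEdges s).Connected}

/-- The star `K_{1,n-1}` on vertex set `Fin n`: vertex `0` is adjacent to all others. -/
def starGraph (n : ℕ) : SimpleGraph (Fin n) where
  Adj i j := i ≠ j ∧ ((i : ℕ) = 0 ∨ (j : ℕ) = 0)
  symm := ⟨fun _ _ h => ⟨h.1.symm, h.2.symm⟩⟩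
  loopless := ⟨fun _ h => h.1 rfl⟩

theorem sq_one_div_sqrt_sub_le {a p q b : ℝ} (ha : 0 < a) (hap : a ≤ p) (hpq : p ≤ q)
    (hqb : q ≤ b) : (1 / √p - 1 / √q) ^ 2 ≤ (1 / √a - 1 / √b) ^ 2 := by
  have anti {x y : ℝ} (hx : 0 < x) (hxy : x ≤ y) : 1 / √y ≤ 1 / √x :=
    one_div_le_one_div_of_le (Real.sqrt_pos.2 hx) (Real.sqrt_le_sqrt hxy)
  have hp := ha.trans_le hap
  have hq := hp.trans_le hpq
  exact pow_le_pow_left₀ (sub_nonneg.2 (anti hp hpq)) (by linarith [anti ha hap, anti hq hqb]) 2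

theorem one_div_sqrt_two_le_one : 1 / √2 ≤ 1 := by
  rw [div_le_one (by positivity)]
  exact Real.one_le_sqrt.2 (by norm_num)

theorem one_div_sqrt_three_le_one_div_sqrt_two : 1 / √3 ≤ 1 / √2 :=
  one_div_le_one_div_of_le (by positivity) (Real.sqrt_le_sqrt (by norm_num))

theorem one_div_sqrt_two_sub_one_div_sqrt_three_le : 1 / √2 - 1 / √3 ≤ 1 - 1 / √2 := by
  have h2 : √2 ≤ 3 / 2 := Real.sqrt_le_iff.2 ⟨by norm_num, by norm_num⟩
  have h3 : 3 / 2 ≤ √3 := Real.le_sqrt_of_sq_le (by norm_num)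
  rw [← Real.sqrt_div_self', ← Real.sqrt_div_self']
  linarith

theorem sq_sub_one_div_sqrt_add_sq_div_two :
    ((1 - 1 / √2) ^ 2 + (1 / √2 - 1 / √3) ^ 2) / 2 = (7 - √6 - 3 * √2) / 6 := by
  have h6 : √6 = √2 * √3 := by rw [← Real.sqrt_mul (by norm_num)]; norm_num
  rw [← Real.sqrt_div_self', ← Real.sqrt_div_self', h6]
  ring_nf
  rw [Real.sq_sqrt (by norm_num), Real.sq_sqrt (by norm_num)]
  ring

namespace SimpleGraph

theorem Connected.exists_adj_mem_notMem {V : Type*} {G : SimpleGraph V} (hG : G.Connected)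
    {S : Set V} {u w : V} (hu : u ∈ S) (hw : w ∉ S) : ∃ a b, G.Adj a b ∧ a ∈ S ∧ b ∉ S := by
  obtain ⟨p⟩ := hG.preconnected u w
  obtain ⟨d, -, ha, hb⟩ := p.exists_boundary_dart S hu hw
  exact ⟨d.fst, d.snd, d.adj, ha, hb⟩

variable {V : Type*} [Fintype V] (G : SimpleGraph V) [DecidableRel G.Adj]

theorem sum_dart_edge {M : Type*} [AddCommMonoid M] (f : Sym2 V → M) :
    ∑ d : G.Dart, f d.edge = 2 • ∑ e ∈ G.edgeFinset, f e := by
  classical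
  rw [← Finset.sum_fiberwise_of_maps_to (g := Dart.edge) (t := G.edgeFinset)
    (fun d _ => G.mem_edgeFinset.2 d.edge_mem), Finset.smul_sum]
  refine Finset.sum_congr rfl fun e he => ?_
  rw [Finset.sum_congr rfl fun d hd => congrArg f (Finset.mem_filter.1 hd).2, Finset.sum_const,
    G.dart_edge_fiber_card e (G.mem_edgeFinset.1 he)]

theorem sum_dart_fst {M : Type*} [AddCommMonoid M] (g : V → M) :
    ∑ d : G.Dart, g d.fst = ∑ v, G.degree v • g v := by
  classical
  rw [← Finset.sum_fiberwise_of_maps_to (g := fun d : G.Dart => d.fst) (t := univ)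
    fun _ _ => mem_univ _]
  refine Finset.sum_congr rfl fun v _ => ?_
  rw [Finset.sum_congr rfl fun d hd => congrArg g (Finset.mem_filter.1 hd).2, Finset.sum_const,
    G.dart_fst_fiber_card_eq_degree]

theorem sum_dart_snd {M : Type*} [AddCommMonoid M] (g : V → M) :
    ∑ d : G.Dart, g d.snd = ∑ d : G.Dart, g d.fst :=
  Equiv.sum_comp (Function.Involutive.toPerm _ Dart.symm_involutive) fun d : G.Dart => g d.fst

theorem sum_edgeFinset_lift_add (g : V → ℝ) :
    ∑ e ∈ G.edgeFinset, Sym2.lift ⟨fun a b => g a + g b, fun _ _ => add_comm _ _⟩ e =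
      ∑ v, G.degree v * g v := by
  have h := G.sum_dart_edge (Sym2.lift ⟨fun a b => g a + g b, fun _ _ => add_comm _ _⟩)
  simp only [Dart.edge, Sym2.lift_mk, Finset.sum_add_distrib, sum_dart_snd, sum_dart_fst,
    nsmul_eq_mul] at h
  push_cast at h
  linarith

theorem randicIndex_eq_sum :
    randicIndex G = ∑ e ∈ G.edgeFinset,
      Sym2.lift ⟨fun a b => 1 / √(G.degree a * G.degree b),
        fun a b => by simp only [mul_comm]⟩ e := by
  unfold randicIndex
  congr!

noncomputable def randicDefect : Sym2 V → ℝ :=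
  Sym2.lift ⟨fun a b => (1 / √(G.degree a) - 1 / √(G.degree b)) ^ 2 / 2, fun _ _ => by ring⟩

@[simp]
theorem randicDefect_mk (a b : V) :
    G.randicDefect s(a, b) = (1 / √(G.degree a) - 1 / √(G.degree b)) ^ 2 / 2 :=
  rfl

theorem randicDefect_nonneg (e : Sym2 V) : 0 ≤ G.randicDefect e := by
  induction e using Sym2.ind with
  | h a b => rw [randicDefect_mk]; positivity

theorem randicIndex_eq_half_card_sub_sum_randicDefect (h : ∀ v, 0 < G.degree v) :
    randicIndex G = Fintype.card V / 2 - ∑ e ∈ G.edgeFinset, G.randicDefect e := by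
  have half : (Fintype.card V : ℝ) / 2 = ∑ e ∈ G.edgeFinset, Sym2.lift
      ⟨fun a b => (1 / √(G.degree a)) ^ 2 / 2 + (1 / √(G.degree b)) ^ 2 / 2,
        fun _ _ => add_comm _ _⟩ e := by
    rw [G.sum_edgeFinset_lift_add fun v => (1 / √(G.degree v)) ^ 2 / 2]
    have hv (v : V) : (G.degree v : ℝ) * ((1 / √(G.degree v)) ^ 2 / 2) = 1 / 2 := by
      rw [div_pow, one_pow, Real.sq_sqrt (Nat.cast_nonneg _)]
      field_simp [(Nat.cast_pos.2 (h v)).ne']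
    simp only [hv, Finset.sum_const, Finset.card_univ, nsmul_eq_mul]
    ring
  rw [randicIndex_eq_sum, half, ← Finset.sum_sub_distrib]
  refine Finset.sum_congr rfl fun e _ => ?_
  induction e using Sym2.ind with
  | h a b =>
    simp only [Sym2.lift_mk, randicDefect_mk]
    rw [Real.sqrt_mul (Nat.cast_nonneg _), ← one_div_mul_one_div]
    ring

theorem card_edgeFinset_div_le_randicIndex :
    (#G.edgeFinset : ℝ) / (Fintype.card V - 1) ≤ randicIndex G := by
  rw [randicIndex_eq_sum, div_eq_mul_one_div, ← nsmul_eq_mul, ← Finset.sum_const]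
  refine Finset.sum_le_sum fun e he => ?_
  induction e using Sym2.ind with
  | h a b =>
    have hab : G.Adj a b := G.mem_edgeFinset.1 he
    have hdeg (v : V) : (G.degree v : ℝ) ≤ Fintype.card V - 1 := by
      have := G.degree_lt_card_verts v
      rw [le_sub_iff_add_le]
      exact_mod_cast this
    have ha : (0 : ℝ) < G.degree a := Nat.cast_pos.2 (G.degree_pos_iff_exists_adj a |>.2 ⟨b, hab⟩)
    have hb : (0 : ℝ) < G.degree b :=
      Nat.cast_pos.2 (G.degree_pos_iff_exists_adj b |>.2 ⟨a, hab.symm⟩)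
    refine one_div_le_one_div_of_le (by positivity) ?_
    rw [Real.sqrt_le_iff]
    exact ⟨ha.le.trans (hdeg a), by nlinarith [hdeg a, hdeg b]⟩

theorem card_mul_minDegree_le_two_mul_card_edgeFinset :
    Fintype.card V * G.minDegree ≤ 2 * #G.edgeFinset := by
  rw [← sum_degrees_eq_twice_card_edges, ← smul_eq_mul, ← Finset.card_univ]
  exact Finset.card_nsmul_le_sum _ _ _ fun v _ => G.minDegree_le_degree v

theorem card_mul_minDegree_div_le_randicIndex [Nonempty V] :
    (Fintype.card V * G.minDegree : ℝ) / (2 * (Fintype.card V - 1)) ≤ randicIndex G := by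
  have hV : (1 : ℝ) ≤ Fintype.card V := by exact_mod_cast Fintype.card_pos
  calc (Fintype.card V * G.minDegree : ℝ) / (2 * (Fintype.card V - 1))
      = (Fintype.card V * G.minDegree : ℝ) / 2 / (Fintype.card V - 1) := (div_div _ _ _).symm
    _ ≤ (2 * #G.edgeFinset : ℝ) / 2 / (Fintype.card V - 1) := by
        gcongr ?_ / _ / _
        exact_mod_cast G.card_mul_minDegree_le_two_mul_card_edgeFinset
    _ ≤ randicIndex G := by simpa using G.card_edgeFinset_div_le_randicIndex

theorem le_randicDefect_mk {a b : V} (ha : 0 < G.degree a) {p q : ℝ} (hap : (G.degree a : ℝ) ≤ p)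
    (hpq : p ≤ q) (hqb : q ≤ G.degree b) :
    (1 / √p - 1 / √q) ^ 2 / 2 ≤ G.randicDefect s(a, b) := by
  rw [randicDefect_mk]
  gcongr ?_ / _
  exact sq_one_div_sqrt_sub_le (Nat.cast_pos.2 ha) hap hpq hqb

theorem exists_ne_degree_eq_one_of_degree_le_two (hG : ∀ v, G.degree v ≤ 2) {u : V}
    (hu : G.degree u = 1) : ∃ w, w ≠ u ∧ G.degree w = 1 := by
  obtain ⟨w, hwu, hw⟩ := G.exists_ne_odd_degree_of_exists_odd_degree u (hu ▸ odd_one)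
  refine ⟨w, hwu, ?_⟩
  have := hG w
  interval_cases h : G.degree w
  · exact absurd hw (by decide)
  · rfl
  · exact absurd hw (by decide)

variable {G}

theorem Connected.two_le_degree_of_adj_of_degree_eq_one (hG : G.Connected)
    (hV : 3 ≤ Fintype.card V) {u v : V} (hu : G.degree u = 1) (huv : G.Adj u v) :
    2 ≤ G.degree v := by
  classical
  by_contra! hv
  replace hv : G.degree v = 1 :=
    le_antisymm (Nat.lt_succ_iff.1 hv) ((G.degree_pos_iff_exists_adj v).2 ⟨u, huv.symm⟩)
  obtain ⟨w, -, hw⟩ := Finset.exists_mem_notMem_of_card_lt_card (s := {u, v}) (t := univ)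
    ((Finset.card_le_two).trans_lt (by rw [card_univ]; omega))
  obtain ⟨a, b, hab, ha, hb⟩ :=
    hG.exists_adj_mem_notMem (S := {x | x = u ∨ x = v}) (Or.inl rfl) (by simpa using hw)
  rcases ha with rfl | rfl
  · exact hb (Or.inr ((degree_eq_one_iff_existsUnique_adj.1 hu).unique hab huv))
  · exact hb (Or.inl ((degree_eq_one_iff_existsUnique_adj.1 hv).unique hab huv.symm))

theorem Connected.le_randicDefect_of_degree_eq_one (hG : G.Connected) (hV : 3 ≤ Fintype.card V)
    {u v : V} (hu : G.degree u = 1) (huv : G.Adj u v) :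
    (1 - 1 / √2) ^ 2 / 2 ≤ G.randicDefect s(u, v) := by
  simpa using G.le_randicDefect_mk (a := u) (b := v) (p := 1) (q := 2) (by omega) (by simp [hu])
    (by norm_num) (by exact_mod_cast hG.two_le_degree_of_adj_of_degree_eq_one hV hu huv)

theorem Connected.le_sum_randicDefect_of_three_le_degree (hG : G.Connected)
    (hV : 3 ≤ Fintype.card V) {u w : V} (hu : G.degree u = 1) (hw : 3 ≤ G.degree w) :
    ((1 - 1 / √2) ^ 2 + (1 / √2 - 1 / √3) ^ 2) / 2 ≤ ∑ e ∈ G.edgeFinset, G.randicDefect e := by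
  have hnonneg : ∀ e ∈ G.edgeFinset, 0 ≤ G.randicDefect e := fun e _ => G.randicDefect_nonneg e
  obtain ⟨a, b, hab, ha, hb⟩ : ∃ a b, G.Adj a b ∧ G.degree a ≤ 2 ∧ ¬G.degree b ≤ 2 :=
    hG.exists_adj_mem_notMem (S := {x | G.degree x ≤ 2}) (show G.degree u ≤ 2 by omega)
      (show ¬G.degree w ≤ 2 by omega)
  have hab_mem : s(a, b) ∈ G.edgeFinset := G.mem_edgeFinset.2 (G.mem_edgeSet.2 hab)
  have hb3 : (3 : ℝ) ≤ G.degree b := by exact_mod_cast not_le.1 hb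
  by_cases hau : a = u
  · subst hau
    have single := Finset.single_le_sum hnonneg hab_mem
    have := G.le_randicDefect_mk (a := a) (b := b) (p := 1) (q := 3) (by omega) (by simp [hu])
      (by norm_num) hb3
    simp only [Real.sqrt_one, div_one] at this
    nlinarith [mul_nonneg (sub_nonneg.2 one_div_sqrt_two_le_one)
      (sub_nonneg.2 one_div_sqrt_three_le_one_div_sqrt_two)]
  · obtain ⟨v, huv⟩ := (G.degree_pos_iff_exists_adj u).1 (by omega)
    have hub : u ≠ b := by rintro rfl; omega
    have hne : s(u, v) ≠ s(a, b) := by simp [Ne.symm hau, hub]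
    have two := Finset.add_le_sum hnonneg (G.mem_edgeFinset.2 (G.mem_edgeSet.2 huv)) hab_mem hne
    have := G.le_randicDefect_mk (p := 2) (q := 3) ((G.degree_pos_iff_exists_adj a).2 ⟨b, hab⟩)
      (by exact_mod_cast ha) (by norm_num) hb3
    linarith [hG.le_randicDefect_of_degree_eq_one hV hu huv]

theorem Connected.le_sum_randicDefect_of_degree_le_two (hG : G.Connected)
    (hV : 3 ≤ Fintype.card V) (hmax : ∀ v, G.degree v ≤ 2) {u : V} (hu : G.degree u = 1) :
    (1 - 1 / √2) ^ 2 ≤ ∑ e ∈ G.edgeFinset, G.randicDefect e := by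
  obtain ⟨u', hu'u, hu'⟩ := G.exists_ne_degree_eq_one_of_degree_le_two hmax hu
  obtain ⟨v, huv⟩ := (G.degree_pos_iff_exists_adj u).1 (by omega)
  obtain ⟨v', hu'v'⟩ := (G.degree_pos_iff_exists_adj u').1 (by omega)
  have huv' : u ≠ v' := by
    rintro rfl; have := hG.two_le_degree_of_adj_of_degree_eq_one hV hu' hu'v'; omega
  have hne : s(u, v) ≠ s(u', v') := by simp [Ne.symm hu'u, huv']
  have two := Finset.add_le_sum (fun e _ => G.randicDefect_nonneg e)
    (G.mem_edgeFinset.2 (G.mem_edgeSet.2 huv)) (G.mem_edgeFinset.2 (G.mem_edgeSet.2 hu'v')) hne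
  linarith [hG.le_randicDefect_of_degree_eq_one hV hu huv,
    hG.le_randicDefect_of_degree_eq_one hV hu' hu'v']

theorem Connected.le_sum_randicDefect_of_degree_eq_one (hG : G.Connected)
    (hV : 3 ≤ Fintype.card V) {u : V} (hu : G.degree u = 1) :
    (7 - √6 - 3 * √2) / 6 ≤ ∑ e ∈ G.edgeFinset, G.randicDefect e := by
  rw [← sq_sub_one_div_sqrt_add_sq_div_two]
  by_cases hmax : ∃ w, 3 ≤ G.degree w
  · obtain ⟨w, hw⟩ := hmax
    exact hG.le_sum_randicDefect_of_three_le_degree hV hu hw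
  · simp only [not_exists, not_le] at hmax
    have := hG.le_sum_randicDefect_of_degree_le_two hV (fun v => Nat.lt_succ_iff.1 (hmax v)) hu
    nlinarith [pow_le_pow_left₀ (sub_nonneg.2 one_div_sqrt_three_le_one_div_sqrt_two)
      one_div_sqrt_two_sub_one_div_sqrt_three_le 2]

theorem Connected.randicIndex_div_minDegree_le (hG : G.Connected) (hV : 3 ≤ Fintype.card V) :
    randicIndex G / G.minDegree ≤ (3 * Fintype.card V - 7 + √6 + 3 * √2) / 6 := by
  have : Nontrivial V := Fintype.one_lt_card_iff_nontrivial.1 (by omega)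
  have hR := G.randicIndex_eq_half_card_sub_sum_randicDefect
    fun v => hG.preconnected.degree_pos_of_nontrivial v
  have hdefect := Finset.sum_nonneg fun e (_ : e ∈ G.edgeFinset) => G.randicDefect_nonneg e
  obtain ⟨u, hu⟩ := G.exists_minimal_degree_vertex
  rcases (show G.minDegree = 1 ∨ 2 ≤ G.minDegree by
    have := hG.preconnected.minDegree_pos_of_nontrivial; omega) with hδ | hδ
  · rw [hδ, Nat.cast_one, div_one, hR]
    linarith [hG.le_sum_randicDefect_of_degree_eq_one hV (hu ▸ hδ)]
  · have hδ' : (2 : ℝ) ≤ G.minDegree := by exact_mod_cast hδ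
    rw [div_le_iff₀ (by linarith)]
    have h6 : 2 ≤ √6 := Real.le_sqrt_of_sq_le (by norm_num)
    have h2 : 1 ≤ √2 := Real.one_le_sqrt.2 (by norm_num)
    have hV' : (3 : ℝ) ≤ Fintype.card V := by exact_mod_cast hV
    nlinarith

end SimpleGraph

theorem randic_div_minDegree_bounds
    {n : ℕ} (hn : 3 ≤ n) (G : SimpleGraph (Fin n)) [DecidableRel G.Adj] (hG : G.Connected) :
    (n : ℝ) / (2 * ((n : ℝ) - 1)) ≤ randicIndex G / (G.minDegree : ℝ) ∧
    randicIndex G / (G.minDegree : ℝ) ≤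
      (3 * (n : ℝ) - 7 + Real.sqrt 6 + 3 * Real.sqrt 2) / 6 := by
  have hV : 3 ≤ Fintype.card (Fin n) := by simpa using hn
  have : Nontrivial (Fin n) := Fin.nontrivial_iff_two_le.2 (by omega)
  have hδ : (0 : ℝ) < G.minDegree := Nat.cast_pos.2 hG.preconnected.minDegree_pos_of_nontrivial
  refine ⟨?_, by simpa using hG.randicIndex_div_minDegree_le hV⟩
  rw [le_div_iff₀ hδ, div_mul_eq_mul_div]
  simpa using G.card_mul_minDegree_div_le_randicIndex
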